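/- arXiv:1602.05914 — 2 statements merged into one kernel-verified Lean document; each statement's English description precedes it below -/
import Mathlib

section
/- Let X_1,…,X_n be independent random variables such that X_i takes the value b_i with probability p and the value 0 with probability 1 − p, where 0 ≤ b_i ≤ l for every i and l > 0. Let X = Σ_i X_i and μ = E[X] = p·Σ_i b_i. Then for every α > 0, Pr[|X − μ| > α·μ] ≤ 2·exp(−2·α²·p·μ / l). -/
open MeasureTheory ProbabilityTheory

/-!
Each centred summand `bᵢ ξᵢ - p bᵢ` lives in an interval of length `bᵢ`, so by Hoeffding's lemma
it is sub-Gaussian with variance proxy `bᵢ² / 4`; by independence the centred sum is sub-Gaussian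
with proxy `∑ bᵢ² / 4`, and the Chernoff bound on both tails gives `2 exp (-2 (α μ)² / ∑ bᵢ²)`.
Since `0 ≤ bᵢ ≤ l`, `∑ bᵢ² ≤ l ∑ bᵢ = l μ / p`, which turns this into the stated bound.
-/

open scoped NNReal

namespace ProbabilityTheory

section Bernoulli

variable {Ω : Type*} [MeasurableSpace Ω] {μ : Measure Ω} [IsProbabilityMeasure μ]
  {ξ : Ω → ℝ} {p : ℝ}

lemma ae_eq_zero_or_eq_one_of_bernoulli (hξ : Measurable ξ) (hp0 : 0 ≤ p) (hp1 : p ≤ 1)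
    (h1 : μ {ω | ξ ω = 1} = ENNReal.ofReal p) (h0 : μ {ω | ξ ω = 0} = ENNReal.ofReal (1 - p)) :
    ∀ᵐ ω ∂μ, ξ ω = 0 ∨ ξ ω = 1 := by
  have hdisj : Disjoint {ω | ξ ω = 1} {ω | ξ ω = 0} :=
    Set.disjoint_left.mpr fun ω h1 h0 => one_ne_zero (h1.symm.trans h0)
  have hunion : μ ({ω | ξ ω = 1} ∪ {ω | ξ ω = 0}) = 1 := by
    rw [measure_union hdisj (hξ (measurableSet_singleton 0)), h1, h0,
      ← ENNReal.ofReal_add hp0 (sub_nonneg.mpr hp1), add_sub_cancel, ENNReal.ofReal_one]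
  filter_upwards [mem_ae_iff.mpr ((prob_compl_eq_zero_iff
    ((hξ (measurableSet_singleton 1)).union (hξ (measurableSet_singleton 0)))).mpr hunion)]
    with ω hω
  exact hω.symm

lemma integral_eq_of_bernoulli (hξ : Measurable ξ) (hp0 : 0 ≤ p) (hp1 : p ≤ 1)
    (h1 : μ {ω | ξ ω = 1} = ENNReal.ofReal p) (h0 : μ {ω | ξ ω = 0} = ENNReal.ofReal (1 - p)) :
    μ[ξ] = p := by
  have hind : ξ =ᵐ[μ] {ω | ξ ω = 1}.indicator 1 := by
    filter_upwards [ae_eq_zero_or_eq_one_of_bernoulli hξ hp0 hp1 h1 h0] with ω hω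
    rcases hω with hω | hω <;> simp [Set.indicator, hω]
  have hA : MeasurableSet {ω | ξ ω = 1} := hξ (measurableSet_singleton 1)
  rw [integral_congr_ae hind, integral_indicator_one hA,
    measureReal_def, h1, ENNReal.toReal_ofReal hp0]

lemma hasSubgaussianMGF_const_mul_sub_of_bernoulli (hξ : Measurable ξ) (hp0 : 0 ≤ p)
    (hp1 : p ≤ 1) (h1 : μ {ω | ξ ω = 1} = ENNReal.ofReal p)
    (h0 : μ {ω | ξ ω = 0} = ENNReal.ofReal (1 - p)) (b : ℝ) :
    HasSubgaussianMGF (fun ω => b * ξ ω - p * b) ((‖b‖₊ / 2) ^ 2) μ := by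
  have hmem : ∀ᵐ ω ∂μ, b * ξ ω ∈ Set.uIcc 0 b := by
    filter_upwards [ae_eq_zero_or_eq_one_of_bernoulli hξ hp0 hp1 h1 h0] with ω hω
    rcases hω with hω | hω <;> simp [hω]
  have h := hasSubgaussianMGF_of_mem_Icc (hξ.const_mul b).aemeasurable hmem
  rwa [integral_const_mul, integral_eq_of_bernoulli hξ hp0 hp1 h1 h0, max_sub_min_eq_abs',
    zero_sub, abs_neg, Real.nnnorm_abs, mul_comm b p] at h

end Bernoulli

lemma HasSubgaussianMGF.measure_abs_gt_le {Ω : Type*} [MeasurableSpace Ω] {μ : Measure Ω}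
    [IsFiniteMeasure μ] {Y : Ω → ℝ} {c : ℝ≥0} (h : HasSubgaussianMGF Y c μ) {ε : ℝ}
    (hε : 0 ≤ ε) :
    μ {ω | ε < |Y ω|} ≤ ENNReal.ofReal (2 * Real.exp (-ε ^ 2 / (2 * c))) := by
  have hsub : {ω | ε < |Y ω|} ⊆ {ω | ε ≤ Y ω} ∪ {ω | ε ≤ (-Y) ω} := fun ω hω => by
    rcases lt_abs.mp (show ε < |Y ω| from hω) with h | h
    exacts [Or.inl h.le, Or.inr h.le]
  calc μ {ω | ε < |Y ω|}
      ≤ μ {ω | ε ≤ Y ω} + μ {ω | ε ≤ (-Y) ω} := (measure_mono hsub).trans (measure_union_le _ _)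
    _ = ENNReal.ofReal (μ.real {ω | ε ≤ Y ω}) + ENNReal.ofReal (μ.real {ω | ε ≤ (-Y) ω}) := by
      rw [ofReal_measureReal, ofReal_measureReal]
    _ ≤ ENNReal.ofReal (Real.exp (-ε ^ 2 / (2 * c))) +
        ENNReal.ofReal (Real.exp (-ε ^ 2 / (2 * c))) := by
      gcongr
      exacts [h.measure_ge_le hε, h.neg.measure_ge_le hε]
    _ = ENNReal.ofReal (2 * Real.exp (-ε ^ 2 / (2 * c))) := by
      rw [← ENNReal.ofReal_add (Real.exp_pos _).le (Real.exp_pos _).le, ← two_mul]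

lemma hasSubgaussianMGF_sum_mul_sub_of_bernoulli {Ω ι : Type*} [MeasurableSpace Ω]
    {μ : Measure Ω} [IsProbabilityMeasure μ] {ξ : ι → Ω → ℝ} {p : ℝ}
    (hξ : ∀ i, Measurable (ξ i)) (hindep : iIndepFun ξ μ) (hp0 : 0 ≤ p) (hp1 : p ≤ 1)
    (h1 : ∀ i, μ {ω | ξ i ω = 1} = ENNReal.ofReal p)
    (h0 : ∀ i, μ {ω | ξ i ω = 0} = ENNReal.ofReal (1 - p)) (b : ι → ℝ) (s : Finset ι) :
    HasSubgaussianMGF (fun ω => ∑ i ∈ s, b i * ξ i ω - p * ∑ i ∈ s, b i)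
      (∑ i ∈ s, (‖b i‖₊ / 2) ^ 2) μ := by
  have hindep' : iIndepFun (fun i ω => b i * ξ i ω - p * b i) μ :=
    hindep.comp (fun i x => b i * x - p * b i) fun i => by fun_prop
  have h := HasSubgaussianMGF.sum_of_iIndepFun hindep' (s := s)
    fun i _ => hasSubgaussianMGF_const_mul_sub_of_bernoulli (hξ i) hp0 hp1 (h1 i) (h0 i) (b i)
  simpa only [Finset.sum_sub_distrib, Finset.mul_sum] using h

end ProbabilityTheory

lemma sum_sq_le_mul_sum {ι : Type*} {s : Finset ι} {b : ι → ℝ} {l : ℝ}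
    (hb0 : ∀ i ∈ s, 0 ≤ b i) (hbl : ∀ i ∈ s, b i ≤ l) :
    ∑ i ∈ s, b i ^ 2 ≤ l * ∑ i ∈ s, b i := by
  rw [Finset.mul_sum]
  exact Finset.sum_le_sum fun i hi => by
    rw [sq]; exact mul_le_mul_of_nonneg_right (hbl i hi) (hb0 i hi)

lemma chernoff_exponent_le_hoeffding_exponent {ι : Type*} {s : Finset ι} {b : ι → ℝ} {l : ℝ}
    (hl : 0 < l) (hb0 : ∀ i ∈ s, 0 ≤ b i) (hbl : ∀ i ∈ s, b i ≤ l) (p α : ℝ) :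
    2 * α ^ 2 * p * (p * ∑ i ∈ s, b i) / l ≤
      (α * (p * ∑ i ∈ s, b i)) ^ 2 / (2 * ∑ i ∈ s, (b i / 2) ^ 2) := by
  set S := ∑ i ∈ s, b i
  have hquarter : ∑ i ∈ s, (b i / 2) ^ 2 = (∑ i ∈ s, b i ^ 2) / 4 := by
    rw [Finset.sum_div]; exact Finset.sum_congr rfl fun i _ => by ring
  rcases (Finset.sum_nonneg hb0).eq_or_lt with hS | hS
  · simp [S, ← hS]
  obtain ⟨j, hj, hbj⟩ := Finset.exists_lt_of_sum_lt (s := s) (f := 0) (g := b)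
    (by simpa using hS)
  have hQ : 0 < ∑ i ∈ s, b i ^ 2 :=
    Finset.sum_pos' (fun i _ => sq_nonneg _) ⟨j, hj, pow_pos hbj 2⟩
  have hQS := sum_sq_le_mul_sum hb0 hbl
  rw [hquarter, div_le_div_iff₀ hl (by positivity)]
  nlinarith [mul_le_mul_of_nonneg_left hQS (by positivity : 0 ≤ α ^ 2 * p ^ 2 * S)]

/-- **Weighted Chernoff-type corollary of the Hoeffding bound.**
Let `X 1, …, X n` be independent random variables such that `X i` takes the value `b i` with
probability `p` and the value `0` with probability `1 - p`, where `0 ≤ b i ≤ l` for every `i`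
and `l > 0`.  (We model this by writing `X i = b i * ξ i` with `ξ i` independent Bernoulli(p)
indicators.)  Let `X = ∑ i, X i` and `μX = E[X] = p * ∑ i, b i`.  Then for every `α > 0`,
`Pr[|X - μX| > α * μX] ≤ 2 * exp (- 2 * α ^ 2 * p * μX / l)`. -/
theorem stmt_1 {Ω : Type*} [MeasurableSpace Ω] (μ : Measure Ω) [IsProbabilityMeasure μ]
    (n : ℕ) (b : Fin n → ℝ) (l : ℝ) (hl : 0 < l)
    (hb0 : ∀ i, 0 ≤ b i) (hbl : ∀ i, b i ≤ l)
    (p : ℝ) (hp0 : 0 ≤ p) (hp1 : p ≤ 1)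
    (ξ : Fin n → Ω → ℝ) (hmeas : ∀ i, Measurable (ξ i))
    (hindep : iIndepFun ξ μ)
    (h1 : ∀ i, μ {ω | ξ i ω = 1} = ENNReal.ofReal p)
    (h0 : ∀ i, μ {ω | ξ i ω = 0} = ENNReal.ofReal (1 - p))
    (X : Fin n → Ω → ℝ) (hX : ∀ i ω, X i ω = b i * ξ i ω)
    (μX : ℝ) (hμX : μX = p * ∑ i, b i)
    (α : ℝ) (hα : 0 < α) :
    μ {ω | α * μX < |(∑ i, X i ω) - μX|} ≤
      ENNReal.ofReal (2 * Real.exp (-(2 * α ^ 2 * p * μX) / l)) := by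
  subst hμX
  have hε : 0 ≤ α * (p * ∑ i, b i) :=
    mul_nonneg hα.le (mul_nonneg hp0 (Finset.sum_nonneg fun i _ => hb0 i))
  have hexp := chernoff_exponent_le_hoeffding_exponent (s := Finset.univ) hl
    (fun i _ => hb0 i) (fun i _ => hbl i) p α
  simp only [hX]
  refine ((hasSubgaussianMGF_sum_mul_sub_of_bernoulli hmeas hindep hp0 hp1 h1 h0 b
    Finset.univ).measure_abs_gt_le hε).trans ?_
  gcongr ENNReal.ofReal (2 * Real.exp ?_)
  rw [neg_div, neg_div, neg_le_neg_iff]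
  push_cast
  simpa only [Real.norm_eq_abs, div_pow, sq_abs] using hexp
end

section
/- Let M be a finite set of items and let v_1,…,v_n be valuations on M (functions v_i : 2^M → ℝ with v_i(∅) = 0, monotone with respect to inclusion). Let T = (T_1,…,T_n) be an allocation supported by prices p' : M → ℝ≥0, i.e., for every bidder i and every subset B ⊆ T_i, v_i(B) ≥ Σ_{j∈B} p'_j. Then any outcome (S_1,…,S_n) of the fixed-price auction with prices p_j = p'_j/2, run on all n bidders in an arbitrary fixed order, satisfies Σ_i v_i(S_i) ≥ (Σ_{j ∈ ∪_i T_i} p'_j)/2. -/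
open Finset

/-- `IsFixedPriceOutcome M v p L S` says that the allocation `S` is an outcome of the
fixed-price auction with item prices `p` over the items `M`, run on the bidders listed in `L`
(in that order): bidders not in `L` get nothing, and each bidder in turn takes, among the items
still available, a bundle maximizing her value minus the posted prices. -/
def IsFixedPriceOutcome {ι : Type*} [DecidableEq ι] {n : ℕ} (M : Finset ι)
    (v : Fin n → Finset ι → ℝ) (p : ι → ℝ) (L : List (Fin n)) (S : Fin n → Finset ι) : Prop :=
  (∀ i, i ∉ L → S i = ∅) ∧
  ∀ t : Fin L.length,
    S (L.get t) ⊆ M \ ((L.take t).foldr (fun i acc => S i ∪ acc) ∅) ∧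
    ∀ B ⊆ M \ ((L.take t).foldr (fun i acc => S i ∪ acc) ∅),
      v (L.get t) B - ∑ j ∈ B, p j ≤ v (L.get t) (S (L.get t)) - ∑ j ∈ S (L.get t), p j

/-! Bidder `i` could have bought the still-unsold part of `T i`, which is worth at least its
`p'`-price to her and costs half of it; so her utility `v i (S i) - p'(S i) / 2` is at least
`p'(T i \ sold) / 2`. Summing over the bidders, the sold items are covered by the payments and
the unsold items of `⋃ i, T i` by the utilities. -/

namespace Finset

theorem sum_biUnion_le_sum_sum {κ α β : Type*} [DecidableEq α] [AddCommMonoid β]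
    [PartialOrder β] [IsOrderedAddMonoid β] {s : Finset κ} {t : κ → Finset α} {f : α → β}
    (hf : ∀ x ∈ s.biUnion t, 0 ≤ f x) :
    ∑ x ∈ s.biUnion t, f x ≤ ∑ i ∈ s, ∑ x ∈ t i, f x := by
  classical
  induction s using Finset.induction_on with
  | empty => simp
  | insert i s hi ih =>
    rw [biUnion_insert] at hf ⊢
    rw [sum_insert hi]
    calc ∑ x ∈ t i ∪ s.biUnion t, f x
        ≤ ∑ x ∈ t i ∪ s.biUnion t, f x + ∑ x ∈ t i ∩ s.biUnion t, f x :=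
          le_add_of_nonneg_right (sum_nonneg fun x hx => hf x (inter_subset_union hx))
      _ = ∑ x ∈ t i, f x + ∑ x ∈ s.biUnion t, f x := sum_union_inter
      _ ≤ _ := by grw [ih fun x hx => hf x (subset_union_right hx)]

end Finset

theorem List.foldr_union_subset_biUnion {κ α : Type*} [Fintype κ] [DecidableEq α]
    (f : κ → Finset α) (l : List κ) :
    l.foldr (fun i acc => f i ∪ acc) ∅ ⊆ Finset.univ.biUnion f := by
  induction l with
  | nil => exact Finset.empty_subset _
  | cons a l ih => exact Finset.union_subset (Finset.subset_biUnion_of_mem f (mem_univ a)) ih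

namespace IsFixedPriceOutcome

variable {ι : Type*} [DecidableEq ι] {n : ℕ} {M : Finset ι} {v : Fin n → Finset ι → ℝ}
  {L : List (Fin n)} {S : Fin n → Finset ι} {i : Fin n}

theorem subset {p : ι → ℝ} (hS : IsFixedPriceOutcome M v p L S) (hi : i ∈ L) : S i ⊆ M := by
  obtain ⟨t, rfl⟩ := List.mem_iff_get.1 hi
  exact (hS.2 t).1.trans sdiff_subset

theorem utility_le_of_disjoint {p : ι → ℝ} (hS : IsFixedPriceOutcome M v p L S) (hi : i ∈ L)
    {B : Finset ι} (hBM : B ⊆ M) (hB : Disjoint B (univ.biUnion S)) :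
    v i B - ∑ j ∈ B, p j ≤ v i (S i) - ∑ j ∈ S i, p j := by
  obtain ⟨t, rfl⟩ := List.mem_iff_get.1 hi
  exact (hS.2 t).2 B (subset_sdiff.2 ⟨hBM, hB.mono_right (List.foldr_union_subset_biUnion S _)⟩)

theorem half_sum_add_half_sum_unsold_le {p' : ι → ℝ}
    (hS : IsFixedPriceOutcome M v (fun j => p' j / 2) L S) (hi : i ∈ L) {T : Finset ι}
    (hTM : T ⊆ M) (hsupp : ∀ B ⊆ T, ∑ j ∈ B, p' j ≤ v i B) :
    (∑ j ∈ S i, p' j) / 2 + (∑ j ∈ T \ univ.biUnion S, p' j) / 2 ≤ v i (S i) := by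
  have hutil := hS.utility_le_of_disjoint hi (sdiff_subset.trans hTM) sdiff_disjoint
  have hval := hsupp (T \ univ.biUnion S) sdiff_subset
  simp only [← sum_div] at hutil
  linarith

end IsFixedPriceOutcome

theorem stmt_2_general {ι : Type*} [DecidableEq ι] {n : ℕ} (M : Finset ι)
    (v : Fin n → Finset ι → ℝ)
    (T : Fin n → Finset ι) (hTM : ∀ i, T i ⊆ M)
    (p' : ι → ℝ) (hp' : ∀ j ∈ M, 0 ≤ p' j)
    (hsupp : ∀ i, ∀ B ⊆ T i, ∑ j ∈ B, p' j ≤ v i B)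
    (L : List (Fin n)) (hall : ∀ i, i ∈ L)
    (S : Fin n → Finset ι)
    (hS : IsFixedPriceOutcome M v (fun j => p' j / 2) L S) :
    (∑ j ∈ Finset.univ.biUnion T, p' j) / 2 ≤ ∑ i, v i (S i) := by
  set sold := univ.biUnion S
  set U := univ.biUnion T
  have hsoldM : sold ⊆ M := biUnion_subset.2 fun i _ => hS.subset (hall i)
  have hsold : ∑ j ∈ sold, p' j ≤ ∑ i, ∑ j ∈ S i, p' j :=
    sum_biUnion_le_sum_sum fun j hj => hp' j (hsoldM hj)
  have hunsold : ∑ j ∈ U \ sold, p' j ≤ ∑ i, ∑ j ∈ T i \ sold, p' j := by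
    have hU : U \ sold = univ.biUnion fun i => T i \ sold := by
      ext j
      simp only [U, mem_sdiff, mem_biUnion, mem_univ, true_and]
      tauto
    rw [hU]
    exact sum_biUnion_le_sum_sum fun j hj =>
      hp' j (biUnion_subset.2 (fun i _ => sdiff_subset.trans (hTM i)) hj)
  have hbidders := sum_le_sum fun i (_ : i ∈ univ) =>
    hS.half_sum_add_half_sum_unsold_le (hall i) (hTM i) (hsupp i)
  have hsold_part : ∑ j ∈ U ∩ sold, p' j ≤ ∑ j ∈ sold, p' j :=
    sum_le_sum_of_subset_of_nonneg inter_subset_right fun j hj _ => hp' j (hsoldM hj)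
  rw [sum_add_distrib, ← sum_div, ← sum_div] at hbidders
  rw [← sum_inter_add_sum_sdiff U sold]
  linarith

/-- **Lemma 4.2.** Let `T = (T 1, …, T n)` be an allocation supported by prices `p'`, i.e.
`v i B ≥ ∑_{j ∈ B} p' j` for every bidder `i` and every `B ⊆ T i`.  Then any outcome
`(S 1, …, S n)` of the fixed-price auction with prices `p j = p' j / 2` run on all `n` bidders
in an arbitrary fixed order satisfies `∑ i, v i (S i) ≥ (∑_{j ∈ ⋃ i, T i} p' j) / 2`. -/
theorem stmt_2 {ι : Type*} [DecidableEq ι] {n : ℕ} (M : Finset ι)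
    (v : Fin n → Finset ι → ℝ)
    (hv0 : ∀ i, v i ∅ = 0)
    (hvmono : ∀ i ⦃S T : Finset ι⦄, S ⊆ T → T ⊆ M → v i S ≤ v i T)
    (T : Fin n → Finset ι) (hTM : ∀ i, T i ⊆ M)
    (hTdisj : ∀ i k, i ≠ k → Disjoint (T i) (T k))
    (p' : ι → ℝ) (hp' : ∀ j ∈ M, 0 ≤ p' j)
    (hsupp : ∀ i, ∀ B ⊆ T i, ∑ j ∈ B, p' j ≤ v i B)
    (L : List (Fin n)) (hnd : L.Nodup) (hall : ∀ i, i ∈ L)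
    (S : Fin n → Finset ι)
    (hS : IsFixedPriceOutcome M v (fun j => p' j / 2) L S) :
    (∑ j ∈ Finset.univ.biUnion T, p' j) / 2 ≤ ∑ i, v i (S i) :=
  stmt_2_general M v T hTM p' hp' hsupp L hall S hS
end
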